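/- No strictly suboptimal local minimizer: let F = {w ∈ ℂ : |w| = 1, s_b Re(w v_b) ≥ 0 ∀b} and P(w) = (1/N) Σ_b Q(t · s_b Re(w v_b)) with t > 0, where Q is the Gaussian Q-function. If w₁ ∈ F is a global minimizer of P over F, then every local minimizer w₂ ∈ F of P over F satisfies P(w₂) = P(w₁). -/

import Mathlib

/-!
Move from the local minimizer `w₂` towards `w₁` along the chord and project back to the unit
circle. On the cone of feasible points `P` is convex (each term is the Gaussian tail, which is
convex and decreasing on `[0, ∞)`, composed with a linear functional that is nonnegative there),
and the radial projection of a point of the chord scales it by a factor `≥ 1`, which can only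
decrease `P`. So the projected points, which tend to `w₂`, have value at most
`α P(w₁) + (1 - α) P(w₂)`, and local minimality forces `P(w₂) ≤ P(w₁)`.
-/

noncomputable def gaussQ (x : ℝ) : ℝ :=
  (Real.sqrt (2 * Real.pi))⁻¹ * ∫ u in Set.Ioi x, Real.exp (-u ^ 2 / 2)

open MeasureTheory Set Filter Topology Metric

lemma integrable_exp_neg_sq_div_two : Integrable fun u : ℝ => Real.exp (-u ^ 2 / 2) := by
  convert integrable_exp_neg_mul_sq (b := (1 / 2 : ℝ)) (by norm_num) using 2 with u
  ring_nf

lemma gaussQ_eq_sub_intervalIntegral (x : ℝ) :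
    gaussQ x = (Real.sqrt (2 * Real.pi))⁻¹ *
      ((∫ u in Ioi 0, Real.exp (-u ^ 2 / 2)) - ∫ u in (0 : ℝ)..x, Real.exp (-u ^ 2 / 2)) := by
  have hi := integrable_exp_neg_sq_div_two
  rw [gaussQ, ← intervalIntegral.integral_Ioi_sub_Ioi' hi.integrableOn hi.integrableOn,
    sub_sub_cancel]

lemma hasDerivAt_gaussQ (x : ℝ) :
    HasDerivAt gaussQ (-((Real.sqrt (2 * Real.pi))⁻¹ * Real.exp (-x ^ 2 / 2))) x := by
  have hc : Continuous fun u : ℝ => Real.exp (-u ^ 2 / 2) := by fun_prop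
  have hint : HasDerivAt (fun y => ∫ u in (0 : ℝ)..y, Real.exp (-u ^ 2 / 2))
      (Real.exp (-x ^ 2 / 2)) x :=
    intervalIntegral.integral_hasDerivAt_right
      integrable_exp_neg_sq_div_two.intervalIntegrable
      (hc.stronglyMeasurableAtFilter _ _) hc.continuousAt
  rw [funext gaussQ_eq_sub_intervalIntegral]
  simpa using (hint.const_sub _).const_mul (Real.sqrt (2 * Real.pi))⁻¹

lemma antitone_gaussQ : Antitone gaussQ := by
  refine antitone_of_deriv_nonpos (fun x => (hasDerivAt_gaussQ x).differentiableAt) fun x => ?_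
  rw [(hasDerivAt_gaussQ x).deriv, neg_nonpos]
  positivity

lemma convexOn_gaussQ : ConvexOn ℝ (Ici 0) gaussQ := by
  have hd : Differentiable ℝ gaussQ := fun x => (hasDerivAt_gaussQ x).differentiableAt
  refine MonotoneOn.convexOn_of_deriv (convex_Ici 0) hd.continuous.continuousOn
    hd.differentiableOn fun x hx y hy hxy => ?_
  rw [interior_Ici] at hx hy
  rw [(hasDerivAt_gaussQ x).deriv, (hasDerivAt_gaussQ y).deriv, neg_le_neg_iff]
  gcongr
  exact hx.le

section Cone

variable {E : Type*} [NormedAddCommGroup E] [NormedSpace ℝ E]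

theorem IsLocalMinOn.isMinOn_sphere_inter_cone {C : Set E}
    (hC : ∀ x ∈ C, ∀ c : ℝ, 0 < c → c • x ∈ C) {f : E → ℝ} (hf : ConvexOn ℝ C f)
    (hf_smul : ∀ x ∈ C, ∀ c : ℝ, 1 ≤ c → f (c • x) ≤ f x) {w : E}
    (hw : w ∈ sphere (0 : E) 1 ∩ C) (hloc : IsLocalMinOn f (sphere 0 1 ∩ C) w) :
    IsMinOn f (sphere 0 1 ∩ C) w := by
  intro z hz
  have hw0 : w ≠ 0 := ne_zero_of_mem_unit_sphere ⟨w, hw.1⟩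
  set g : ℝ → E := fun α => α • z + (1 - α) • w
  have hg : Tendsto g (𝓝[>] 0) (𝓝 w) := by
    have : Continuous g := by fun_prop
    exact (this.tendsto' 0 w (by simp [g])).mono_left nhdsWithin_le_nhds
  have hnormalize : ContinuousAt (fun x : E => ‖x‖⁻¹ • x) w :=
    (continuous_norm.continuousAt.inv₀ (norm_ne_zero_iff.2 hw0)).smul continuousAt_id
  have hgn : Tendsto (fun α => ‖g α‖⁻¹ • g α) (𝓝[>] 0) (𝓝 w) := by
    have h := hnormalize.tendsto.comp hg
    rwa [mem_sphere_zero_iff_norm.1 hw.1, inv_one, one_smul] at h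
  have hstep : ∀ α ∈ Ioo (0 : ℝ) 1, g α ≠ 0 →
      ‖g α‖⁻¹ • g α ∈ sphere 0 1 ∩ C ∧ f (‖g α‖⁻¹ • g α) ≤ α * f z + (1 - α) * f w := by
    rintro α ⟨hα0, hα1⟩ hgα
    have hgC : g α ∈ C := hf.1 hz.2 hw.2 hα0.le (by linarith) (by ring)
    have hg_le : ‖g α‖ ≤ 1 := mem_closedBall_zero_iff.1 <|
      convex_closedBall (0 : E) 1 (sphere_subset_closedBall hz.1)
        (sphere_subset_closedBall hw.1) hα0.le (by linarith) (by ring)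
    have hpos : 0 < ‖g α‖ := norm_pos_iff.2 hgα
    refine ⟨⟨?_, hC _ hgC _ (inv_pos.2 hpos)⟩, ?_⟩
    · rw [mem_sphere_zero_iff_norm, norm_smul, norm_inv, norm_norm, inv_mul_cancel₀ hpos.ne']
    · calc f (‖g α‖⁻¹ • g α) ≤ f (g α) := hf_smul _ hgC _ ((one_le_inv₀ hpos).2 hg_le)
        _ ≤ α • f z + (1 - α) • f w := hf.2 hz.2 hw.2 hα0.le (by linarith) (by ring)
        _ = α * f z + (1 - α) * f w := rfl
  have hev : ∀ᶠ α in 𝓝[>] (0 : ℝ), α ∈ Ioo (0 : ℝ) 1 ∧ g α ≠ 0 :=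
    Filter.Eventually.and (Ioo_mem_nhdsGT one_pos) (hg.eventually_ne hw0)
  have hgnS : Tendsto (fun α => ‖g α‖⁻¹ • g α) (𝓝[>] 0) (𝓝[sphere 0 1 ∩ C] w) :=
    tendsto_nhdsWithin_iff.2 ⟨hgn, hev.mono fun α hα => (hstep α hα.1 hα.2).1⟩
  obtain ⟨α, ⟨⟨hα0, hα1⟩, hgα⟩, hmin⟩ := (hev.and (hgnS.eventually hloc)).exists
  have hval := (hstep α ⟨hα0, hα1⟩ hgα).2
  exact le_of_mul_le_mul_left (by linarith) hα0

end Cone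

section PolyhedralCone

variable {E ι : Type*} [AddCommGroup E] [Module ℝ E]

lemma convexOn_finset_sum {s : Set E} (hs : Convex ℝ s) (t : Finset ι) {f : ι → E → ℝ}
    (hf : ∀ i ∈ t, ConvexOn ℝ s (f i)) : ConvexOn ℝ s fun x => ∑ i ∈ t, f i x := by
  induction t using Finset.cons_induction with
  | empty => simpa using convexOn_const 0 hs
  | cons i t hi ih =>
    simp only [Finset.sum_cons]
    exact (hf i (Finset.mem_cons_self i t)).add (ih fun j hj => hf j (Finset.mem_cons_of_mem hj))

variable (ℓ : ι → E →ₗ[ℝ] ℝ)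

lemma convex_setOf_forall_nonneg : Convex ℝ {x | ∀ i, 0 ≤ ℓ i x} := by
  simpa only [ofPred_forall] using convex_iInter fun i => convex_halfSpace_ge (ℓ i).isLinear 0

lemma smul_mem_setOf_forall_nonneg {x : E} (hx : x ∈ {x | ∀ i, 0 ≤ ℓ i x}) {c : ℝ} (hc : 0 ≤ c) :
    c • x ∈ {x | ∀ i, 0 ≤ ℓ i x} := fun i => by
  simpa only [map_smul, smul_eq_mul] using mul_nonneg hc (hx i)

variable [Fintype ι]

lemma convexOn_sum_gaussQ_comp : ConvexOn ℝ {x | ∀ i, 0 ≤ ℓ i x} fun x => ∑ i, gaussQ (ℓ i x) :=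
  convexOn_finset_sum (convex_setOf_forall_nonneg ℓ) _ fun i _ =>
    (convexOn_gaussQ.comp_linearMap (ℓ i)).subset (fun _ hx => hx i) (convex_setOf_forall_nonneg ℓ)

lemma sum_gaussQ_comp_smul_le {x : E} (hx : ∀ i, 0 ≤ ℓ i x) {c : ℝ} (hc : 1 ≤ c) :
    ∑ i, gaussQ (ℓ i (c • x)) ≤ ∑ i, gaussQ (ℓ i x) :=
  Finset.sum_le_sum fun i _ => antitone_gaussQ <| by
    rw [map_smul, smul_eq_mul]
    exact le_mul_of_one_le_left (hx i) hc

end PolyhedralCone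

theorem local_min_is_global_general
    (N : ℕ) (v : Fin N → ℂ) (s : Fin N → ℝ)
    (t : ℝ) (ht : 0 < t) (F : Set ℂ)
    (hF : F = {w : ℂ | ‖w‖ = 1 ∧ ∀ b : Fin N, s b * (w * v b).re ≥ 0})
    (P : ℂ → ℝ)
    (hP : ∀ w : ℂ, P w = (1 / (N : ℝ)) * ∑ b : Fin N, gaussQ (t * (s b * (w * v b).re)))
    (w₁ : ℂ) (hw₁ : w₁ ∈ F) (hglob : ∀ w ∈ F, P w₁ ≤ P w)
    (w₂ : ℂ) (hw₂ : w₂ ∈ F) (hloc : IsLocalMinOn P F w₂) :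
    P w₂ = P w₁ := by
  let ℓ : Fin N → ℂ →ₗ[ℝ] ℝ := fun b => (t * s b) • (Complex.reLm ∘ₗ LinearMap.mulRight ℝ (v b))
  have hℓ : ∀ b w, ℓ b w = t * (s b * (w * v b).re) := fun b w => by
    simp [ℓ, mul_assoc]
  have hF' : F = sphere 0 1 ∩ {w | ∀ b, 0 ≤ ℓ b w} := by
    ext w
    simp [hF, hℓ, mul_nonneg_iff_of_pos_left ht]
  have hP' : P = fun w => (1 / (N : ℝ)) • ∑ b, gaussQ (ℓ b w) := by
    funext w
    simp [hP, hℓ]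
  rw [hF'] at hw₁ hw₂ hloc
  rw [hP'] at hloc ⊢
  have hN : (0 : ℝ) ≤ 1 / N := by positivity
  have hmin := hloc.isMinOn_sphere_inter_cone
    (fun w hw c hc => smul_mem_setOf_forall_nonneg ℓ hw hc.le)
    ((convexOn_sum_gaussQ_comp ℓ).smul hN)
    (fun w hw c hc => smul_le_smul_of_nonneg_left (sum_gaussQ_comp_smul_le ℓ hw hc) hN) hw₂
  exact le_antisymm (hmin hw₁) (hP' ▸ hglob w₂ (hF' ▸ hw₂))

theorem local_min_is_global
    (N : ℕ) (v : Fin N → ℂ) (s : Fin N → ℝ) (hs : ∀ b, s b = 1 ∨ s b = -1)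
    (t : ℝ) (ht : 0 < t) (F : Set ℂ)
    (hF : F = {w : ℂ | ‖w‖ = 1 ∧ ∀ b : Fin N, s b * (w * v b).re ≥ 0})
    (P : ℂ → ℝ)
    (hP : ∀ w : ℂ, P w = (1 / (N : ℝ)) * ∑ b : Fin N, gaussQ (t * (s b * (w * v b).re)))
    (w₁ : ℂ) (hw₁ : w₁ ∈ F) (hglob : ∀ w ∈ F, P w₁ ≤ P w)
    (w₂ : ℂ) (hw₂ : w₂ ∈ F) (hloc : IsLocalMinOn P F w₂) :
    P w₂ = P w₁ :=
  local_min_is_global_general N v s t ht F hF P hP w₁ hw₁ hglob w₂ hw₂ hloc
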